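/- arXiv:2010.05942 — 3 statements merged into one kernel-verified Lean document; each statement's English description precedes it below -/
import Mathlib

section
/- Equality case of the Gibbs variational principle: for a probability vector p' on S, Ω[p'] = -β⁻¹ log Ξ holds if and only if p' equals the Boltzmann distribution p; equivalently, Ω[p'] > Ω[p] whenever p' ≠ p. -/
/-!
Writing `log p ν = -β E ν - log Ξ`, the grand potential of a probability vector `q` splits as
`Ω[q] = -β⁻¹ log Ξ + β⁻¹ D(q ‖ p)`, where `D(q ‖ p) = ∑ q (log q - log p)` is the relative entropy.
Gibbs' inequality says `D(q ‖ p) = ∑ p · klFun (q / p) ≥ 0` with equality only at `q = p`,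
because `klFun x = x log x + 1 - x` vanishes on `[0, ∞)` only at `x = 1`.
-/

open Real InformationTheory Finset

lemma mul_klFun_div {a b : ℝ} (hb : b ≠ 0) :
    b * klFun (a / b) = a * (log a - log b) + b - a := by
  rcases eq_or_ne a 0 with rfl | ha
  · simp [klFun_zero]
  · rw [klFun_apply, log_div ha hb]
    field_simp

section Gibbs

variable {ι : Type*} [Fintype ι] {q p : ι → ℝ}

lemma sum_mul_log_sub_log_eq_sum_mul_klFun (hp : ∀ i, p i ≠ 0) (hsum : ∑ i, q i = ∑ i, p i) :
    ∑ i, q i * (log (q i) - log (p i)) = ∑ i, p i * klFun (q i / p i) := by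
  simp only [mul_klFun_div (hp _), sum_sub_distrib, sum_add_distrib, hsum, add_sub_cancel_right]

lemma sum_mul_log_sub_log_nonneg (hq : ∀ i, 0 ≤ q i) (hp : ∀ i, 0 < p i)
    (hsum : ∑ i, q i = ∑ i, p i) :
    0 ≤ ∑ i, q i * (log (q i) - log (p i)) := by
  rw [sum_mul_log_sub_log_eq_sum_mul_klFun (fun i ↦ (hp i).ne') hsum]
  exact sum_nonneg fun i _ ↦ mul_nonneg (hp i).le (klFun_nonneg (div_nonneg (hq i) (hp i).le))

lemma sum_mul_log_sub_log_eq_zero_iff (hq : ∀ i, 0 ≤ q i) (hp : ∀ i, 0 < p i)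
    (hsum : ∑ i, q i = ∑ i, p i) :
    ∑ i, q i * (log (q i) - log (p i)) = 0 ↔ q = p := by
  have hkl : ∀ i, 0 ≤ klFun (q i / p i) := fun i ↦ klFun_nonneg (div_nonneg (hq i) (hp i).le)
  rw [sum_mul_log_sub_log_eq_sum_mul_klFun (fun i ↦ (hp i).ne') hsum,
    sum_eq_zero_iff_of_nonneg fun i _ ↦ mul_nonneg (hp i).le (hkl i), funext_iff]
  refine forall_congr' fun i ↦ ?_
  rw [mul_eq_zero, or_iff_right (hp i).ne', klFun_eq_zero_iff (div_nonneg (hq i) (hp i).le),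
    div_eq_one_iff_eq (hp i).ne']
  simp

lemma sum_mul_log_sub_log_pos (hq : ∀ i, 0 ≤ q i) (hp : ∀ i, 0 < p i)
    (hsum : ∑ i, q i = ∑ i, p i) (hne : q ≠ p) :
    0 < ∑ i, q i * (log (q i) - log (p i)) :=
  (sum_mul_log_sub_log_nonneg hq hp hsum).lt_of_ne
    (Ne.symm (mt (sum_mul_log_sub_log_eq_zero_iff hq hp hsum).mp hne))

end Gibbs

lemma sum_mul_inv_mul_log_add_eq {ι : Type*} [Fintype ι] {β Ξ : ℝ} (hβ : β ≠ 0) (hΞ : 0 < Ξ)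
    (E q : ι → ℝ) (hq : ∑ ν, q ν = 1) :
    ∑ ν, q ν * (β⁻¹ * log (q ν) + E ν) =
      -β⁻¹ * log Ξ + β⁻¹ * ∑ ν, q ν * (log (q ν) - log (exp (-β * E ν) / Ξ)) := by
  have hterm : ∀ ν, q ν * (β⁻¹ * log (q ν) + E ν) =
      q ν * (-β⁻¹ * log Ξ) + β⁻¹ * (q ν * (log (q ν) - log (exp (-β * E ν) / Ξ))) := by
    intro ν
    rw [log_div (exp_pos _).ne' hΞ.ne', log_exp]
    field_simp
    ring
  rw [sum_congr rfl fun ν _ ↦ hterm ν, sum_add_distrib, ← sum_mul, hq, one_mul, mul_sum]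

/-- **Equality case of the Gibbs variational principle** (finite state space).
With `β > 0`, energies `E : S → ℝ` on a nonempty finite set `S`, partition function
`Ξ = ∑ ν, exp(-β E ν)`, Boltzmann distribution `p ν = exp(-β E ν)/Ξ`, and
grand-potential functional `Ω[p'] = ∑ ν, p' ν * (β⁻¹ log (p' ν) + E ν)`
(with `0 log 0 = 0`): for a probability vector `p'` on `S`, `Ω[p'] = -β⁻¹ log Ξ`
holds if and only if `p' = p`; equivalently `Ω[p'] > Ω[p]` whenever `p' ≠ p`. -/
theorem gibbs_variational_equality
    {S : Type*} [Fintype S] [Nonempty S]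
    (β : ℝ) (hβ : 0 < β) (E : S → ℝ)
    (Ξ : ℝ) (hΞ : Ξ = ∑ ν, Real.exp (-β * E ν))
    (p : S → ℝ) (hp : ∀ ν, p ν = Real.exp (-β * E ν) / Ξ)
    (Ω : (S → ℝ) → ℝ)
    (hΩ : ∀ q : S → ℝ, Ω q = ∑ ν, q ν * (β⁻¹ * Real.log (q ν) + E ν))
    (p' : S → ℝ) (hp'nonneg : ∀ ν, 0 ≤ p' ν) (hp'sum : ∑ ν, p' ν = 1) :
    (Ω p' = -β⁻¹ * Real.log Ξ ↔ p' = p) ∧ (p' ≠ p → Ω p < Ω p') := by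
  have hΞpos : 0 < Ξ := hΞ ▸ sum_pos (fun ν _ ↦ exp_pos _) univ_nonempty
  have hp_pos : ∀ ν, 0 < p ν := fun ν ↦ hp ν ▸ div_pos (exp_pos _) hΞpos
  have hp_sum : ∑ ν, p ν = 1 := by
    simp only [hp, ← sum_div, ← hΞ, div_self hΞpos.ne']
  have hsum : ∑ ν, p' ν = ∑ ν, p ν := hp'sum.trans hp_sum.symm
  have hΩ_eq : ∀ q, ∑ ν, q ν = 1 →
      Ω q = -β⁻¹ * log Ξ + β⁻¹ * ∑ ν, q ν * (log (q ν) - log (p ν)) := fun q hq ↦ by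
    simp only [hΩ, hp, sum_mul_inv_mul_log_add_eq hβ.ne' hΞpos E q hq]
  have hΩp : Ω p = -β⁻¹ * log Ξ := by simp [hΩ_eq p hp_sum]
  refine ⟨?_, fun hne ↦ ?_⟩
  · rw [hΩ_eq p' hp'sum, add_eq_left, mul_eq_zero, or_iff_right (inv_ne_zero hβ.ne')]
    exact sum_mul_log_sub_log_eq_zero_iff hp'nonneg hp_pos hsum
  · rw [hΩp, hΩ_eq p' hp'sum, lt_add_iff_pos_right]
    exact mul_pos (inv_pos.mpr hβ) (sum_mul_log_sub_log_pos hp'nonneg hp_pos hsum hne)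
end

section
/- Hohenberg–Kohn uniqueness theorem (finite formulation): if two one-body potentials v, v' ∈ ℝ^m produce the same equilibrium one-body density, i.e. Σ_ν p_ν(v) ρ̂_ν = Σ_ν p_ν(v') ρ̂_ν, then the two Gibbs distributions coincide, p(v) = p(v'), and consequently there exists a constant c ∈ ℝ with ⟨ρ̂_ν, v - v'⟩ = c for every microstate ν ∈ S. -/
lemma hk_aux_nonneg {x y : ℝ} (hx : 0 < x) (hy : 0 < y) :
    0 ≤ (x - y) * (Real.log x - Real.log y) := by
  rcases le_total x y with h | h
  · have : Real.log x ≤ Real.log y := Real.log_le_log hx h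
    nlinarith
  · have : Real.log y ≤ Real.log x := Real.log_le_log hy h
    nlinarith

lemma hk_aux_eq {x y : ℝ} (hx : 0 < x) (hy : 0 < y)
    (h : (x - y) * (Real.log x - Real.log y) = 0) : x = y := by
  rcases lt_trichotomy x y with hlt | heq | hgt
  · have : Real.log x < Real.log y := Real.log_lt_log hx hlt
    nlinarith
  · exact heq
  · have : Real.log y < Real.log x := Real.log_lt_log hy hgt
    nlinarith

/-- **Hohenberg–Kohn uniqueness theorem** (finite formulation).
Fix `β > 0`, a nonempty finite set `S` of microstates, intrinsic energies `I : S → ℝ`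
and instantaneous density vectors `ρ̂ : S → ℝ^m`.  For a one-body potential `v ∈ ℝ^m`
the total energy of microstate `ν` is `E ν v = I ν + ⟨ρ̂ ν, v⟩`, the Gibbs distribution is
`p v ν = exp(-β E ν v) / ∑ μ, exp(-β E μ v)`, and the equilibrium one-body density is
`ρ v = ∑ ν, p v ν • ρ̂ ν`.  If two potentials `v, v'` produce the same equilibrium density,
then `p v = p v'`, and consequently there is a constant `c` with `⟨ρ̂ ν, v - v'⟩ = c`
for every microstate `ν`. -/
theorem hohenberg_kohn_uniqueness
    {S : Type*} [Fintype S] [Nonempty S] {m : ℕ}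
    (β : ℝ) (hβ : 0 < β) (I : S → ℝ) (ρhat : S → Fin m → ℝ)
    (E : S → (Fin m → ℝ) → ℝ)
    (hE : ∀ ν v, E ν v = I ν + ∑ i, ρhat ν i * v i)
    (p : (Fin m → ℝ) → S → ℝ)
    (hp : ∀ v ν, p v ν = Real.exp (-β * E ν v) / ∑ μ, Real.exp (-β * E μ v))
    (ρ : (Fin m → ℝ) → Fin m → ℝ)
    (hρ : ∀ v i, ρ v i = ∑ ν, p v ν * ρhat ν i)
    (v v' : Fin m → ℝ) (hsame : ρ v = ρ v') :
    p v = p v' ∧ ∃ c : ℝ, ∀ ν, ∑ i, ρhat ν i * (v i - v' i) = c := by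
  set A : ℝ := ∑ μ, Real.exp (-β * E μ v) with hA
  set B : ℝ := ∑ μ, Real.exp (-β * E μ v') with hB
  have hApos : 0 < A := Finset.sum_pos (fun μ _ => Real.exp_pos _) Finset.univ_nonempty
  have hBpos : 0 < B := Finset.sum_pos (fun μ _ => Real.exp_pos _) Finset.univ_nonempty
  have hpv : ∀ ν, 0 < p v ν := fun ν => by
    rw [hp]; exact div_pos (Real.exp_pos _) hApos
  have hpv' : ∀ ν, 0 < p v' ν := fun ν => by
    rw [hp]; exact div_pos (Real.exp_pos _) hBpos
  have hsum1 : ∑ ν, p v ν = 1 := by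
    simp only [hp]; rw [← Finset.sum_div]; exact div_self hApos.ne'
  have hsum1' : ∑ ν, p v' ν = 1 := by
    simp only [hp]; rw [← Finset.sum_div]; exact div_self hBpos.ne'
  -- d ν = ⟨ρ̂ ν, v - v'⟩
  set d : S → ℝ := fun ν => ∑ i, ρhat ν i * (v i - v' i) with hd
  -- density equality ⇒ ∑ (p v ν - p v' ν) * d ν = 0
  have hkey : ∑ ν, (p v ν - p v' ν) * d ν = 0 := by
    have h1 : ∀ w, ∑ ν, p w ν * d ν = ∑ i, ρ w i * (v i - v' i) := by
      intro w
      simp only [hd, hρ, Finset.sum_mul, Finset.mul_sum]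
      rw [Finset.sum_comm]
      apply Finset.sum_congr rfl; intro ν _
      apply Finset.sum_congr rfl; intro i _; ring
    simp only [sub_mul, Finset.sum_sub_distrib, h1, hsame, sub_self]
  -- log p v ν - log p v' ν = -β * d ν + (log B - log A)
  have hlog : ∀ ν, Real.log (p v ν) - Real.log (p v' ν)
      = -β * d ν + (Real.log B - Real.log A) := by
    intro ν
    rw [hp, hp, Real.log_div (Real.exp_ne_zero _) hApos.ne',
      Real.log_div (Real.exp_ne_zero _) hBpos.ne', Real.log_exp, Real.log_exp,
      hE, hE]
    have hsplit : ∑ i, ρhat ν i * (v i - v' i)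
        = (∑ i, ρhat ν i * v i) - ∑ i, ρhat ν i * v' i := by
      rw [← Finset.sum_sub_distrib]
      exact Finset.sum_congr rfl (fun i _ => by ring)
    simp only [hd]
    rw [hsplit]
    ring
  -- sum of nonneg terms is zero
  have hzero : ∑ ν, (p v ν - p v' ν) * (Real.log (p v ν) - Real.log (p v' ν)) = 0 := by
    calc ∑ ν, (p v ν - p v' ν) * (Real.log (p v ν) - Real.log (p v' ν))
        = ∑ ν, ((-β) * ((p v ν - p v' ν) * d ν)
            + (Real.log B - Real.log A) * (p v ν - p v' ν)) := by
          apply Finset.sum_congr rfl; intro ν _; rw [hlog]; ring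
      _ = (-β) * (∑ ν, (p v ν - p v' ν) * d ν)
            + (Real.log B - Real.log A) * (∑ ν, (p v ν - p v' ν)) := by
          rw [Finset.sum_add_distrib, ← Finset.mul_sum, ← Finset.mul_sum]
      _ = 0 := by
          rw [hkey, Finset.sum_sub_distrib, hsum1, hsum1']; ring
  have heach : ∀ ν ∈ Finset.univ,
      (p v ν - p v' ν) * (Real.log (p v ν) - Real.log (p v' ν)) = 0 := by
    rw [← Finset.sum_eq_zero_iff_of_nonneg (fun ν _ => hk_aux_nonneg (hpv ν) (hpv' ν))]
    exact hzero
  have hpeq : ∀ ν, p v ν = p v' ν := fun ν =>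
    hk_aux_eq (hpv ν) (hpv' ν) (heach ν (Finset.mem_univ ν))
  refine ⟨funext hpeq, (Real.log B - Real.log A) / β, fun ν => ?_⟩
  have h := hlog ν
  rw [hpeq ν, sub_self] at h
  have : β * d ν = Real.log B - Real.log A := by linarith
  field_simp [hd] at this ⊢
  linarith
end

section
/- Hohenberg–Kohn variational principle (finite formulation): for any two one-body potentials v, v' ∈ ℝ^m, F[p(v)] + ⟨ρ(v), v⟩ ≤ F[p(v')] + ⟨ρ(v'), v⟩, where F[p] = Σ_ν p_ν (β⁻¹ log p_ν + I_ν) is the intrinsic Helmholtz energy; equality holds if and only if p(v) = p(v'). In particular, the equilibrium density of potential v minimizes the grand potential Ω_v[ρ(v')] = F[p(v')] + ⟨ρ(v'), v⟩ over all densities representable by some potential v'. -/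
/-!
The grand potential `Ω_v[p] = F[p] + ⟨ρ[p], v⟩` is the Gibbs free energy `∑ p (β⁻¹ log p + E(v))`
of the energies `E(v)`, and it differs from `-β⁻¹ log Z(v)` by `β⁻¹` times the relative entropy of
`p` with respect to the Gibbs distribution of `v`. Gibbs' inequality (nonnegativity of relative
entropy, vanishing only on the diagonal) is then exactly the claim.
-/

open Finset Real InformationTheory

section

variable {S : Type*} [Fintype S]

noncomputable def relEntropy (q p : S → ℝ) : ℝ :=
  ∑ ν, q ν * (log (q ν) - log (p ν))

noncomputable def partitionFunction (β : ℝ) (E : S → ℝ) : ℝ :=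
  ∑ μ, exp (-β * E μ)

noncomputable def gibbs (β : ℝ) (E : S → ℝ) (ν : S) : ℝ :=
  exp (-β * E ν) / partitionFunction β E

noncomputable def freeEnergy (β : ℝ) (E : S → ℝ) (q : S → ℝ) : ℝ :=
  ∑ ν, q ν * (β⁻¹ * log (q ν) + E ν)

section RelEntropy

variable {p q : S → ℝ}

theorem mul_log_sub_log_eq_mul_klFun_add {x y : ℝ} (hy : 0 < y) :
    x * (log x - log y) = y * klFun (x / y) + x - y := by
  rcases eq_or_ne x 0 with rfl | hx
  · simp [klFun_zero]
  · rw [klFun_apply, log_div hx hy.ne']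
    field_simp
    ring

theorem relEntropy_eq_sum_mul_klFun (hp : ∀ ν, 0 < p ν) (hsum : ∑ ν, q ν = ∑ ν, p ν) :
    relEntropy q p = ∑ ν, p ν * klFun (q ν / p ν) := by
  simp only [relEntropy, fun ν => mul_log_sub_log_eq_mul_klFun_add (x := q ν) (hp ν),
    sum_sub_distrib, sum_add_distrib, hsum, add_sub_cancel_right]

theorem relEntropy_nonneg (hp : ∀ ν, 0 < p ν) (hq : ∀ ν, 0 ≤ q ν)
    (hsum : ∑ ν, q ν = ∑ ν, p ν) : 0 ≤ relEntropy q p := by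
  rw [relEntropy_eq_sum_mul_klFun hp hsum]
  exact sum_nonneg fun ν _ => mul_nonneg (hp ν).le (klFun_nonneg (div_nonneg (hq ν) (hp ν).le))

theorem relEntropy_eq_zero_iff (hp : ∀ ν, 0 < p ν) (hq : ∀ ν, 0 ≤ q ν)
    (hsum : ∑ ν, q ν = ∑ ν, p ν) : relEntropy q p = 0 ↔ q = p := by
  have hterm (ν : S) : 0 ≤ p ν * klFun (q ν / p ν) :=
    mul_nonneg (hp ν).le (klFun_nonneg (div_nonneg (hq ν) (hp ν).le))
  rw [relEntropy_eq_sum_mul_klFun hp hsum, sum_eq_zero_iff_of_nonneg fun ν _ => hterm ν,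
    funext_iff]
  refine forall_congr' fun ν => ?_
  rw [mul_eq_zero, or_iff_right (hp ν).ne', klFun_eq_zero_iff (div_nonneg (hq ν) (hp ν).le),
    div_eq_one_iff_eq (hp ν).ne']
  simp

end RelEntropy

section Gibbs

variable [Nonempty S] (β : ℝ) (E : S → ℝ)

theorem partitionFunction_pos : 0 < partitionFunction β E :=
  sum_pos (fun _ _ => exp_pos _) univ_nonempty

theorem gibbs_pos (ν : S) : 0 < gibbs β E ν :=
  div_pos (exp_pos _) (partitionFunction_pos β E)

theorem sum_gibbs : ∑ ν, gibbs β E ν = 1 := by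
  simp only [gibbs]
  rw [← sum_div, ← partitionFunction, div_self (partitionFunction_pos β E).ne']

theorem log_gibbs (ν : S) :
    log (gibbs β E ν) = -β * E ν - log (partitionFunction β E) := by
  rw [gibbs, log_div (exp_ne_zero _) (partitionFunction_pos β E).ne', log_exp]

theorem freeEnergy_eq_relEntropy_gibbs {β : ℝ} (hβ : β ≠ 0) {q : S → ℝ} (hq : ∑ ν, q ν = 1) :
    freeEnergy β E q =
      β⁻¹ * relEntropy q (gibbs β E) - β⁻¹ * log (partitionFunction β E) := by
  have hterm (ν : S) : q ν * (β⁻¹ * log (q ν) + E ν) =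
      β⁻¹ * (q ν * (log (q ν) - log (gibbs β E ν))) -
        β⁻¹ * log (partitionFunction β E) * q ν := by
    rw [log_gibbs]
    field_simp
    ring
  rw [freeEnergy, relEntropy, sum_congr rfl fun ν _ => hterm ν, sum_sub_distrib, ← mul_sum,
    ← mul_sum, hq, mul_one]

theorem freeEnergy_gibbs_le {β : ℝ} (hβ : 0 < β) {q : S → ℝ} (hq : ∀ ν, 0 ≤ q ν)
    (hq1 : ∑ ν, q ν = 1) :
    freeEnergy β E (gibbs β E) ≤ freeEnergy β E q ∧
      (freeEnergy β E (gibbs β E) = freeEnergy β E q ↔ q = gibbs β E) := by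
  have hsum : ∑ ν, q ν = ∑ ν, gibbs β E ν := by rw [hq1, sum_gibbs]
  have hself : relEntropy (gibbs β E) (gibbs β E) = 0 := by simp [relEntropy]
  rw [freeEnergy_eq_relEntropy_gibbs E hβ.ne' hq1,
    freeEnergy_eq_relEntropy_gibbs E hβ.ne' (sum_gibbs β E), hself,
    ← relEntropy_eq_zero_iff (gibbs_pos β E) hq hsum]
  refine ⟨?_, ?_⟩
  · have := mul_nonneg (inv_pos.mpr hβ).le (relEntropy_nonneg (gibbs_pos β E) hq hsum)
    linarith
  · rw [sub_left_inj, mul_zero, eq_comm, mul_eq_zero, or_iff_right (inv_ne_zero hβ.ne')]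

end Gibbs

end

/-- **Hohenberg–Kohn variational principle** (finite formulation).
With `β > 0`, microstates `S` (finite, nonempty), intrinsic energies `I`, instantaneous
densities `ρ̂ : S → ℝ^m`, total energies `E ν v = I ν + ⟨ρ̂ ν, v⟩`, Gibbs distributions
`p v ν = exp(-β E ν v)/∑ μ, exp(-β E μ v)`, equilibrium densities `ρ v = ∑ ν, p v ν • ρ̂ ν`,
and intrinsic Helmholtz energy `F[q] = ∑ ν, q ν (β⁻¹ log (q ν) + I ν)`:
for any two potentials `v, v'`,
`F[p(v)] + ⟨ρ(v), v⟩ ≤ F[p(v')] + ⟨ρ(v'), v⟩`, with equality iff `p(v) = p(v')`;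
i.e. the equilibrium density of `v` minimizes the grand potential
`Ω_v[ρ(v')] = F[p(v')] + ⟨ρ(v'), v⟩` over all `v'`-representable densities. -/
theorem hohenberg_kohn_variational
    {S : Type*} [Fintype S] [Nonempty S] {m : ℕ}
    (β : ℝ) (hβ : 0 < β) (I : S → ℝ) (ρhat : S → Fin m → ℝ)
    (E : S → (Fin m → ℝ) → ℝ)
    (hE : ∀ ν v, E ν v = I ν + ∑ i, ρhat ν i * v i)
    (p : (Fin m → ℝ) → S → ℝ)
    (hp : ∀ v ν, p v ν = Real.exp (-β * E ν v) / ∑ μ, Real.exp (-β * E μ v))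
    (ρ : (Fin m → ℝ) → Fin m → ℝ)
    (hρ : ∀ v i, ρ v i = ∑ ν, p v ν * ρhat ν i)
    (F : (S → ℝ) → ℝ)
    (hF : ∀ q : S → ℝ, F q = ∑ ν, q ν * (β⁻¹ * Real.log (q ν) + I ν))
    (v v' : Fin m → ℝ) :
    F (p v) + (∑ i, ρ v i * v i) ≤ F (p v') + (∑ i, ρ v' i * v i) ∧
    (F (p v) + (∑ i, ρ v i * v i) = F (p v') + (∑ i, ρ v' i * v i) ↔ p v = p v') := by
  set Ev : S → ℝ := fun ν => E ν v
  have hgibbs (w : Fin m → ℝ) : p w = gibbs β (fun ν => E ν w) := funext (hp w)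
  have hΩ (w : Fin m → ℝ) : F (p w) + ∑ i, ρ w i * v i = freeEnergy β Ev (p w) := by
    have hpot : ∑ i, ρ w i * v i = ∑ ν, p w ν * ∑ i, ρhat ν i * v i := by
      simp only [hρ, sum_mul, mul_sum]
      rw [sum_comm]
      simp only [mul_assoc]
    simp only [hF, hpot, freeEnergy, Ev, hE, ← sum_add_distrib, mul_add, add_assoc]
  rw [hΩ, hΩ, hgibbs v, hgibbs v', eq_comm (b := gibbs β _)]
  exact freeEnergy_gibbs_le Ev hβ (fun ν => (gibbs_pos β _ ν).le) (sum_gibbs β _)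
end
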